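/- arXiv:2312.06938 — 2 statements merged into one kernel-verified Lean document; each statement's English description precedes it below -/
import Mathlib

section
/- Let A ⊆ ℝⁿ with 0 ∈ closure(A), let h : ℝⁿ → ℝⁿ be a bi-Lipschitz homeomorphism with h(0) = 0, and let p_m ∈ closure(A) be a sequence with p_m → 0 such that A satisfies condition (SSP) at every p_m. Assume that the sequences of cones LD_{p_m}(A) and LD_{h(p_m)}(h(A)) converge in the Kuratowski sense to sets L and L′ respectively. Then there exists a bi-Lipschitz homeomorphism h̃ : ℝⁿ → ℝⁿ with h̃(0) = 0 such that h̃(L) ⊆ L′. Moreover, if in addition p_m ∈ A \ {0} for all m, then L′ ⊆ L𝒢D(h(A)). -/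
open Filter Topology Set Asymptotics

variable {E : Type*} [NormedAddCommGroup E] [NormedSpace ℝ E]

/-- The direction set `D_p(A)`. -/
def dirSet (A : Set E) (p : E) : Set E :=
  {a | ‖a‖ = 1 ∧ ∃ x : ℕ → E, (∀ i, x i ∈ A ∧ x i ≠ p) ∧
    Tendsto x atTop (𝓝 p) ∧
    Tendsto (fun i => ‖x i - p‖⁻¹ • (x i - p)) atTop (𝓝 a)}

/-- The real tangent cone `LD_p(A)`. -/
def LDir (A : Set E) (p : E) : Set E :=
  {w | ∃ a ∈ dirSet A p, ∃ t : ℝ, 0 ≤ t ∧ w = t • a}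

/-- Condition (SSP) at `p`. -/
def SSP (A : Set E) (p : E) : Prop :=
  ∀ a : ℕ → E, (∀ m, a m ≠ p) → Tendsto a atTop (𝓝 p) →
    (∃ d ∈ dirSet A p, Tendsto (fun m => ‖a m - p‖⁻¹ • (a m - p)) atTop (𝓝 d)) →
    ∃ b : ℕ → E, (∀ m, b m ∈ A) ∧
      Tendsto (fun m => ‖a m - b m‖ / ‖a m - p‖) atTop (𝓝 0) ∧
      Tendsto (fun m => ‖a m - b m‖ / ‖b m - p‖) atTop (𝓝 0)

/-- The geometric directional bundle fiber `𝒢D_p(A)`. -/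
def GDir (A : Set E) (p : E) : Set E :=
  {a | ‖a‖ = 1 ∧ ∃ q : ℕ → E, (∀ m, q m ∈ A) ∧ Tendsto q atTop (𝓝 p) ∧
    ∃ u : ℕ → E, (∀ m, u m ∈ dirSet A (q m)) ∧ Tendsto u atTop (𝓝 a)}

/-- The cone `L𝒢D_p(A)` over the geometric directional bundle fiber. -/
def LGDir (A : Set E) (p : E) : Set E :=
  {w | ∃ a ∈ GDir A p, ∃ t : ℝ, 0 ≤ t ∧ w = t • a}

/-- A bi-Lipschitz homeomorphism of `E`: a bijection which is Lipschitz with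
Lipschitz inverse (equivalently, antilipschitz). -/
def IsBiLipschitz (h : E → E) : Prop :=
  Function.Bijective h ∧ ∃ K K' : NNReal, LipschitzWith K h ∧ AntilipschitzWith K' h

/-- Kuratowski convergence of a sequence of subsets of `E` to a limit set. -/
def KuratowskiTendsto (S : ℕ → Set E) (L : Set E) : Prop :=
  L = {x | ∃ u : ℕ → E, (∀ m, u m ∈ S m) ∧ Tendsto u atTop (𝓝 x)} ∧
  L = {x | ∃ φ : ℕ → ℕ, StrictMono φ ∧
        ∃ u : ℕ → E, (∀ k, u k ∈ S (φ k)) ∧ Tendsto u atTop (𝓝 x)}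

/-! Blow up `h` at `p m` at a scale `t m`: the maps `z ↦ (h (p m + t m • z) - h (p m)) / t m` are
uniformly bi-Lipschitz and fix `0`, so their pointwise limit `h̃` along an ultrafilter is
bi-Lipschitz with `h̃ 0 = 0`. By (SSP), a tangent vector `w` of `A` at `p m` is followed to first
order by points of `A`, so for small scales the blow-up of `h` sends `w` near the tangent cone of
`h(A)` at `h (p m)`. Bounded parts of the cones are totally bounded, so finitely many tangent
vectors control them up to `1/(m+1)`, and one scale `t m` serves all of these. In the limit `h̃`
maps the Kuratowski limit `L` into `L'`.

The second claim is compactness of the unit sphere: limits of unit tangent directions of `h(A)` at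
the points `h (p m) → 0` lie in `𝒢D(h(A))` by definition. -/

open Function Metric
open scoped NNReal

section Rescale

variable {F : Type*} [NormedAddCommGroup F] [NormedSpace ℝ F]

noncomputable def rescale (f : E → F) (q : E) (τ : ℝ) (z : E) : F := τ⁻¹ • (f (q + τ • z) - f q)

@[simp]
lemma rescale_zero (f : E → F) (q : E) (τ : ℝ) : rescale f q τ 0 = 0 := by
  simp [rescale]

lemma LipschitzWith.norm_smul_sub_le {K : ℝ≥0} {f : E → F} (hf : LipschitzWith K f) (c : ℝ)
    (x y : E) : ‖c • (f x - f y)‖ ≤ K * ‖c • (x - y)‖ := by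
  rw [norm_smul, norm_smul, mul_left_comm]
  exact mul_le_mul_of_nonneg_left (hf.norm_sub_le x y) (norm_nonneg c)

lemma LipschitzWith.rescale {K : ℝ≥0} {f : E → F} (hf : LipschitzWith K f) (q : E) {τ : ℝ}
    (hτ : τ ≠ 0) : LipschitzWith K (_root_.rescale f q τ) := by
  refine lipschitzWith_iff_norm_sub_le.2 fun y z => ?_
  calc ‖_root_.rescale f q τ y - _root_.rescale f q τ z‖
        = ‖τ⁻¹ • (f (q + τ • y) - f (q + τ • z))‖ := by
        simp only [_root_.rescale, ← smul_sub, sub_sub_sub_cancel_right]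
    _ ≤ K * ‖τ⁻¹ • (q + τ • y - (q + τ • z))‖ := hf.norm_smul_sub_le _ _ _
    _ = K * ‖y - z‖ := by rw [add_sub_add_left_eq_sub, ← smul_sub, inv_smul_smul₀ hτ]

lemma Function.LeftInverse.rescale {f : E → F} {g : F → E} (hgf : LeftInverse g f) (q : E)
    {τ : ℝ} (hτ : τ ≠ 0) : LeftInverse (_root_.rescale g (f q) τ) (_root_.rescale f q τ) := by
  intro z
  simp only [_root_.rescale, smul_inv_smul₀ hτ, add_sub_cancel, hgf _, add_sub_cancel_left,
    inv_smul_smul₀ hτ]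

end Rescale

section Limits

variable {ι α β : Type*} {l : Filter ι}

lemma LipschitzWith.of_tendsto [PseudoEMetricSpace α] [PseudoEMetricSpace β] {K : ℝ≥0}
    {F : ι → α → β} {f : α → β} (hF : ∀ i, LipschitzWith K (F i))
    (hf : ∀ z, Tendsto (fun i => F i z) l (𝓝 (f z))) [l.NeBot] : LipschitzWith K f :=
  (isClosed_setOfPred_lipschitzWith K).mem_of_tendsto (tendsto_pi_nhds.2 hf)
    (Eventually.of_forall hF)

lemma LipschitzWith.antilipschitzWith_of_leftInverse [PseudoMetricSpace α] [PseudoMetricSpace β]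
    {K : ℝ≥0} {f : α → β} {g : β → α} (hg : LipschitzWith K g) (hgf : LeftInverse g f) :
    AntilipschitzWith K f :=
  AntilipschitzWith.of_le_mul_dist fun x y => by
    simpa only [hgf x, hgf y] using hg.dist_le_mul (f x) (f y)

lemma Function.LeftInverse.of_tendsto [PseudoMetricSpace α] [MetricSpace β] {K : ℝ≥0}
    {F : ι → β → α} {G : ι → α → β} {f : β → α} {g : α → β}
    (hGF : ∀ i, LeftInverse (G i) (F i)) (hG : ∀ i, LipschitzWith K (G i))
    (hf : ∀ z, Tendsto (fun i => F i z) l (𝓝 (f z)))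
    (hg : ∀ z, Tendsto (fun i => G i z) l (𝓝 (g z))) [l.NeBot] : LeftInverse g f := fun z => by
  refine tendsto_nhds_unique (hg (f z)) (tendsto_iff_dist_tendsto_zero.2 ?_)
  refine squeeze_zero (fun _ => dist_nonneg) (fun i => ?_)
    (by simpa using ((tendsto_const_nhds (x := f z)).dist (hf z)).const_mul (K : ℝ))
  calc dist (G i (f z)) z = dist (G i (f z)) (G i (F i z)) := by rw [hGF i z]
    _ ≤ K * dist (f z) (F i z) := (hG i).dist_le_mul _ _

lemma Ultrafilter.exists_biLipschitz_tendsto [MetricSpace α] [ProperSpace α] (U : Ultrafilter ι)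
    {K K' : ℝ≥0} {H G : ι → α → α} {x₀ : α} (hH : ∀ i, LipschitzWith K (H i))
    (hG : ∀ i, LipschitzWith K' (G i)) (hGH : ∀ i, LeftInverse (G i) (H i))
    (hHG : ∀ i, LeftInverse (H i) (G i)) (hH0 : ∀ i, H i x₀ = x₀) :
    ∃ f, Bijective f ∧ LipschitzWith K f ∧ AntilipschitzWith K' f ∧ f x₀ = x₀ ∧
      ∀ z, Tendsto (fun i => H i z) U (𝓝 (f z)) := by
  have hG0 : ∀ i, G i x₀ = x₀ := fun i => by simpa only [hH0 i] using hGH i x₀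
  have hlim : ∀ {C : ℝ≥0} {F : ι → α → α}, (∀ i, LipschitzWith C (F i)) →
      (∀ i, F i x₀ = x₀) → ∀ z, ∃ y, Tendsto (fun i => F i z) U (𝓝 y) := by
    intro C F hF hF0 z
    obtain ⟨y, -, hy⟩ := (isCompact_closedBall x₀ (C * dist z x₀)).ultrafilter_le_nhds'
      (U.map fun i => F i z) (Ultrafilter.mem_map.2 <| univ_mem' fun i => by
        simpa [hF0 i] using (hF i).dist_le_mul z x₀)
    exact ⟨y, hy⟩
  choose f hf using hlim hH hH0
  choose g hg using hlim hG hG0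
  have hgf : LeftInverse g f := .of_tendsto hGH hG hf hg
  refine ⟨f, ⟨hgf.injective, (LeftInverse.of_tendsto hHG hH hg hf).surjective⟩, .of_tendsto hH hf,
    (LipschitzWith.of_tendsto hG hg).antilipschitzWith_of_leftInverse hgf,
    tendsto_nhds_unique (hf x₀) ?_, hf⟩
  simp only [hH0]
  exact tendsto_const_nhds

end Limits

section TangentCone

variable {A : Set E} {p : E}

lemma inv_norm_smul_smul_of_pos {τ : ℝ} (hτ : 0 < τ) (z : E) : ‖τ • z‖⁻¹ • τ • z = ‖z‖⁻¹ • z := by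
  rw [norm_smul, Real.norm_of_nonneg hτ.le, mul_inv, smul_smul, mul_right_comm,
    inv_mul_cancel₀ hτ.ne', one_mul]

lemma mem_dirSet_of_eventually {a : E} {x : ℕ → E} (ha : ‖a‖ = 1)
    (hxA : ∀ᶠ i in atTop, x i ∈ A ∧ x i ≠ p) (hx : Tendsto x atTop (𝓝 p))
    (hdir : Tendsto (fun i => ‖x i - p‖⁻¹ • (x i - p)) atTop (𝓝 a)) : a ∈ dirSet A p := by
  obtain ⟨N, hN⟩ := eventually_atTop.1 hxA
  exact ⟨ha, fun i => x (i + N), fun i => hN _ (Nat.le_add_left N i),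
    hx.comp (tendsto_add_atTop_nat N), hdir.comp (tendsto_add_atTop_nat N)⟩

lemma dirSet_nonempty [ProperSpace E] {x : ℕ → E} (hxA : ∀ᶠ i in atTop, x i ∈ A ∧ x i ≠ p)
    (hx : Tendsto x atTop (𝓝 p)) : (dirSet A p).Nonempty := by
  obtain ⟨a, ha, φ, hφ, hdir⟩ := (isCompact_sphere (0 : E) 1).tendsto_subseq'
    (x := fun i => ‖x i - p‖⁻¹ • (x i - p)) (hxA.mono fun i hi => by
      simpa using norm_smul_inv_norm (𝕜 := ℝ) (sub_ne_zero.2 hi.2)).frequently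
  exact ⟨a, mem_dirSet_of_eventually (mem_sphere_zero_iff_norm.1 ha)
    (hφ.tendsto_atTop.eventually hxA) (hx.comp hφ.tendsto_atTop) hdir⟩

lemma zero_mem_LDir (hne : (dirSet A p).Nonempty) : (0 : E) ∈ LDir A p :=
  let ⟨a, ha⟩ := hne
  ⟨a, ha, 0, le_rfl, (zero_smul ℝ a).symm⟩

lemma inv_norm_smul_mem_dirSet {w : E} (hw : w ∈ LDir A p) (hw0 : w ≠ 0) :
    ‖w‖⁻¹ • w ∈ dirSet A p := by
  obtain ⟨a, ha, s, hs, rfl⟩ := hw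
  have hs0 : 0 < s := hs.lt_of_ne (by rintro rfl; simp at hw0)
  rwa [inv_norm_smul_smul_of_pos hs0, ha.1, inv_one, one_smul]

lemma mem_LDir_of_tendsto [ProperSpace E] {x : ℕ → E} {τ : ℕ → ℝ} {v : E}
    (hxA : ∀ᶠ i in atTop, x i ∈ A ∧ x i ≠ p) (hx : Tendsto x atTop (𝓝 p)) (hτ : ∀ i, 0 < τ i)
    (hv : Tendsto (fun i => (τ i)⁻¹ • (x i - p)) atTop (𝓝 v)) : v ∈ LDir A p := by
  rcases eq_or_ne v 0 with rfl | hv0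
  · exact zero_mem_LDir (dirSet_nonempty hxA hx)
  have hv0' : ‖v‖ ≠ 0 := norm_ne_zero_iff.2 hv0
  refine ⟨‖v‖⁻¹ • v, mem_dirSet_of_eventually (by simpa using norm_smul_inv_norm (𝕜 := ℝ) hv0)
    hxA hx ?_, ‖v‖, norm_nonneg v, (smul_inv_smul₀ hv0' v).symm⟩
  exact ((hv.norm.inv₀ hv0').smul hv).congr fun i => inv_norm_smul_smul_of_pos (inv_pos.2 (hτ i)) _

end TangentCone

namespace SSP

variable {A : Set E} {p w : E}

lemma exists_tendsto_inv_smul_sub (hssp : SSP A p) (hw : w ∈ LDir A p) (hw0 : w ≠ 0)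
    {t : ℕ → ℝ} (ht0 : ∀ i, 0 < t i) (ht : Tendsto t atTop (𝓝 0)) :
    ∃ b : ℕ → E, (∀ i, b i ∈ A) ∧ Tendsto (fun i => (t i)⁻¹ • (b i - p)) atTop (𝓝 w) := by
  set x : ℕ → E := fun i => p + t i • w
  have hxp : ∀ i, x i - p = t i • w := fun i => add_sub_cancel_left _ _
  obtain ⟨b, hbA, hb, -⟩ := hssp x
    (fun i hi => smul_ne_zero (ht0 i).ne' hw0 (by rw [← hxp, hi, sub_self]))
    (by simpa using tendsto_const_nhds.add (ht.smul_const w))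
    ⟨‖w‖⁻¹ • w, inv_norm_smul_mem_dirSet hw hw0,
      tendsto_const_nhds.congr fun i => by rw [hxp, inv_norm_smul_smul_of_pos (ht0 i)]⟩
  have herr : Tendsto (fun i => (t i)⁻¹ • (x i - b i)) atTop (𝓝 0) := by
    refine squeeze_zero_norm (fun i => le_of_eq ?_) (by simpa using hb.const_mul ‖w‖)
    have hw' : ‖w‖ ≠ 0 := norm_ne_zero_iff.2 hw0
    rw [hxp, norm_smul, norm_smul, Real.norm_of_nonneg (ht0 i).le,
      Real.norm_of_nonneg (inv_pos.2 (ht0 i)).le]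
    field_simp
  have hlim := (tendsto_const_nhds (x := w)).sub herr
  rw [sub_zero] at hlim
  refine ⟨b, hbA, hlim.congr fun i => ?_⟩
  rw [← sub_sub_sub_cancel_right (x i) (b i) p, hxp, smul_sub, inv_smul_smul₀ (ht0 i).ne',
    sub_sub_cancel]

lemma exists_subseq_tendsto_rescale [ProperSpace E] {K : ℝ≥0} {h : E → E}
    (hK : LipschitzWith K h) (hinj : Injective h) (hssp : SSP A p) (hw : w ∈ LDir A p)
    {t : ℕ → ℝ} (ht0 : ∀ i, 0 < t i) (ht : Tendsto t atTop (𝓝 0)) :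
    ∃ v ∈ LDir (h '' A) (h p), ∃ φ : ℕ → ℕ, StrictMono φ ∧
      Tendsto (fun k => rescale h p (t (φ k)) w) atTop (𝓝 v) := by
  rcases eq_or_ne w 0 with rfl | hw0
  · obtain ⟨a, ⟨-, x, hxA, hx, -⟩, -⟩ := hw
    refine ⟨0, zero_mem_LDir (dirSet_nonempty (x := h ∘ x)
      (Eventually.of_forall fun i => ⟨mem_image_of_mem h (hxA i).1, hinj.ne (hxA i).2⟩)
      ((hK.continuous.tendsto p).comp hx)), id, strictMono_id, ?_⟩
    simp
  obtain ⟨b, hbA, hb⟩ := hssp.exists_tendsto_inv_smul_sub hw hw0 ht0 ht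
  have hbp : Tendsto b atTop (𝓝 p) := by
    have hlim := tendsto_const_nhds (x := p) |>.add (ht.smul hb)
    rw [zero_smul, add_zero] at hlim
    exact hlim.congr fun i => by rw [smul_inv_smul₀ (ht0 i).ne', add_sub_cancel]
  set c : ℕ → E := fun i => (t i)⁻¹ • (h (b i) - h p)
  obtain ⟨R, hR⟩ := (isBounded_range_of_tendsto _ hb).exists_norm_le
  obtain ⟨v, -, φ, hφ, hcv⟩ := (isCompact_closedBall (0 : E) (K * R)).tendsto_subseq (x := c)
    fun i => mem_closedBall_zero_iff.2 <|
      (hK.norm_smul_sub_le _ _ _).trans (by gcongr; exact hR _ ⟨i, rfl⟩)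
  refine ⟨v, mem_LDir_of_tendsto (x := h ∘ b ∘ φ) (τ := t ∘ φ) ?_
    ((hK.continuous.tendsto p).comp (hbp.comp hφ.tendsto_atTop)) (fun k => ht0 _) hcv, φ, hφ, ?_⟩
  · refine hφ.tendsto_atTop.eventually (p := fun i => h (b i) ∈ h '' A ∧ h (b i) ≠ h p)
      ((hb.eventually_ne hw0).mono fun i hi => ?_)
    exact ⟨mem_image_of_mem h (hbA i), fun e => hi (by rw [hinj e, sub_self, smul_zero])⟩
  have herr : Tendsto (fun i => rescale h p (t i) w - c i) atTop (𝓝 0) := by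
    refine squeeze_zero_norm (fun i => ?_)
      (by simpa using ((tendsto_const_nhds (x := w)).sub hb).norm.const_mul (K : ℝ))
    calc ‖rescale h p (t i) w - c i‖ = ‖(t i)⁻¹ • (h (p + t i • w) - h (b i))‖ := by
          simp only [rescale, c, ← smul_sub, sub_sub_sub_cancel_right]
      _ ≤ K * ‖(t i)⁻¹ • (p + t i • w - b i)‖ := hK.norm_smul_sub_le _ _ _
      _ = K * ‖w - (t i)⁻¹ • (b i - p)‖ := by
          rw [show p + t i • w - b i = t i • w - (b i - p) by abel, smul_sub,
            inv_smul_smul₀ (ht0 i).ne']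
  simpa [Function.comp_def] using (herr.comp hφ.tendsto_atTop).add hcv

lemma eventually_rescale_mem_thickening [ProperSpace E] {K : ℝ≥0} {h : E → E}
    (hK : LipschitzWith K h) (hinj : Injective h) (hssp : SSP A p) (hw : w ∈ LDir A p)
    {ε : ℝ} (hε : 0 < ε) :
    ∀ᶠ τ in 𝓝[>] 0, rescale h p τ w ∈ thickening ε (LDir (h '' A) (h p)) := by
  by_contra hbad
  obtain ⟨t, ht, htbad⟩ := frequently_iff_seq_forall.1
    ((not_eventually.1 hbad).and_eventually self_mem_nhdsWithin)
  obtain ⟨v, hv, φ, -, hφ⟩ := hssp.exists_subseq_tendsto_rescale hK hinj hw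
    (fun i => (htbad i).2) (ht.mono_right nhdsWithin_le_nhds)
  obtain ⟨k, hk⟩ := (hφ.eventually (ball_mem_nhds v hε)).exists
  exact (htbad (φ k)).1 (mem_thickening_iff.2 ⟨v, hv, hk⟩)

end SSP

section

variable {V : Type*} [NormedAddCommGroup V]

lemma exists_scales_eventually_mem_thickening [ProperSpace V] {K : ℝ≥0} {S T : ℕ → Set V}
    {F : ℕ → ℝ → V → V} (hF : ∀ m τ, 0 < τ → LipschitzWith K (F m τ))
    (hST : ∀ m, ∀ w ∈ S m, ∀ ε > 0, ∀ᶠ τ in 𝓝[>] 0, F m τ w ∈ thickening ε (T m)) :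
    ∃ t : ℕ → ℝ, (∀ m, 0 < t m) ∧ ∀ u : ℕ → V, (∀ m, u m ∈ S m) → ∀ w,
      Tendsto u atTop (𝓝 w) → ∀ ε > 0, ∀ᶠ m in atTop, F m (t m) w ∈ thickening ε (T m) := by
  have hnet : ∀ m : ℕ, ∃ N ⊆ S m ∩ ball 0 m, N.Finite ∧
      S m ∩ ball 0 m ⊆ ⋃ y ∈ N, ball y (1 / (m + 1)) := fun m =>
    finite_approx_of_totallyBounded ((isCompact_closedBall (0 : V) m).totallyBounded.subset
      (inter_subset_right.trans ball_subset_closedBall)) _ (by positivity)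
  choose N hNS hNfin hNcov using hnet
  have hscale : ∀ m : ℕ, ∃ τ, 0 < τ ∧ ∀ y ∈ N m, F m τ y ∈ thickening (1 / (m + 1)) (T m) :=
    fun m => ((((hNfin m).eventually_all.2 fun y hy => hST m y (hNS m hy).1 _ (by positivity)).and
      self_mem_nhdsWithin).exists).imp fun τ hτ => ⟨hτ.2, hτ.1⟩
  choose t ht0 htN using hscale
  refine ⟨t, ht0, fun u hu w huw ε hε => ?_⟩
  have hbound : Tendsto (fun m : ℕ => K * (dist w (u m) + 1 / (m + 1)) + 1 / (m + 1)) atTop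
      (𝓝 (K * (0 + 0) + 0)) :=
    (((tendsto_iff_dist_tendsto_zero.1 huw).congr fun m => dist_comm _ _).add
      tendsto_one_div_add_atTop_nhds_zero_nat |>.const_mul _).add
      tendsto_one_div_add_atTop_nhds_zero_nat
  have hbounded : ∀ᶠ m : ℕ in atTop, ‖u m‖ < m :=
    (huw.norm.eventually (gt_mem_nhds (lt_add_one ‖w‖))).and
      (tendsto_natCast_atTop_atTop.eventually_ge_atTop (‖w‖ + 1)) |>.mono fun m hm =>
        hm.1.trans_le hm.2
  filter_upwards [hbounded, hbound.eventually (gt_mem_nhds (by simpa using hε))] with m hm hmε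
  obtain ⟨y, hyN, hy⟩ := mem_iUnion₂.1 (hNcov m ⟨hu m, mem_ball_zero_iff.2 hm⟩)
  obtain ⟨v, hv, hFv⟩ := mem_thickening_iff.1 (htN m y hyN)
  refine mem_thickening_iff.2 ⟨v, hv, lt_of_le_of_lt ?_ hmε⟩
  calc dist (F m (t m) w) v ≤ dist (F m (t m) w) (F m (t m) y) + dist (F m (t m) y) v :=
        dist_triangle _ _ _
    _ ≤ K * dist w y + 1 / (m + 1) := add_le_add ((hF m _ (ht0 m)).dist_le_mul _ _) hFv.le
    _ ≤ K * (dist w (u m) + 1 / (m + 1)) + 1 / (m + 1) := by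
        gcongr
        exact (dist_triangle w (u m) y).trans (add_le_add le_rfl (mem_ball.1 hy).le)

namespace KuratowskiTendsto

variable {S : ℕ → Set V} {L : Set V} {x : V}

lemma exists_tendsto (hL : KuratowskiTendsto S L) (hx : x ∈ L) :
    ∃ u : ℕ → V, (∀ m, u m ∈ S m) ∧ Tendsto u atTop (𝓝 x) := by
  rw [hL.1] at hx
  exact hx

lemma mem_of_frequently (hL : KuratowskiTendsto S L)
    (hx : ∀ ε > 0, ∃ᶠ m in atTop, x ∈ thickening ε (S m)) : x ∈ L := by
  have hfreq : ∀ k : ℕ, ∃ᶠ m in atTop, ∃ v ∈ S m, dist v x < 1 / (k + 1) := fun k =>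
    (hx (1 / (k + 1)) (by positivity)).mono fun m hm => by
      obtain ⟨v, hv, hd⟩ := mem_thickening_iff.1 hm
      exact ⟨v, hv, by rwa [dist_comm]⟩
  obtain ⟨φ, hφ, hφS⟩ := extraction_forall_of_frequently hfreq
  choose v hv hvx using hφS
  rw [hL.2]
  exact ⟨φ, hφ, v, hv, tendsto_iff_dist_tendsto_zero.2 <| squeeze_zero (fun _ => dist_nonneg)
    (fun k => (hvx k).le) tendsto_one_div_add_atTop_nhds_zero_nat⟩

lemma mem_of_tendsto (hL : KuratowskiTendsto S L) {l : Filter ℕ} [l.NeBot] (hl : l ≤ atTop)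
    {y : ℕ → V} (hy : Tendsto y l (𝓝 x))
    (hyS : ∀ ε > 0, ∀ᶠ m in atTop, y m ∈ thickening ε (S m)) : x ∈ L := by
  refine hL.mem_of_frequently fun ε hε => Frequently.filter_mono (Eventually.frequently ?_) hl
  filter_upwards [hl (hyS _ (half_pos hε)), hy (ball_mem_nhds x (half_pos hε))] with m hm hmx
  obtain ⟨v, hv, hd⟩ := mem_thickening_iff.1 hm
  exact mem_thickening_iff.2 ⟨v, hv, by linarith [dist_triangle_left x v (y m), mem_ball.1 hmx]⟩

end KuratowskiTendsto

end

lemma KuratowskiTendsto.subset_LGDir [ProperSpace E] {B L : Set E} {q : ℕ → E} {q₀ : E}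
    (hqB : ∀ m, q m ∈ B) (hq : Tendsto q atTop (𝓝 q₀))
    (hL : KuratowskiTendsto (fun m => LDir B (q m)) L) :
    L ⊆ LGDir B q₀ := by
  intro x hx
  obtain ⟨u, hu, hux⟩ := hL.exists_tendsto hx
  choose a ha s hs0 hus using hu
  obtain ⟨α, hα, φ, hφ, haα⟩ := (isCompact_sphere (0 : E) 1).tendsto_subseq (x := a)
    fun m => mem_sphere_zero_iff_norm.2 (ha m).1
  have hs : Tendsto (s ∘ φ) atTop (𝓝 ‖x‖) := by
    have hsu : ∀ m, s m = ‖u m‖ := fun m => by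
      rw [hus m, norm_smul, (ha m).1, mul_one, Real.norm_of_nonneg (hs0 m)]
    simpa only [Function.comp_def, hsu] using (hux.comp hφ.tendsto_atTop).norm
  refine ⟨α, ⟨mem_sphere_zero_iff_norm.1 hα, q ∘ φ, fun k => hqB _, hq.comp hφ.tendsto_atTop,
    a ∘ φ, fun k => ha _, haα⟩, ‖x‖, norm_nonneg x,
    tendsto_nhds_unique (hux.comp hφ.tendsto_atTop) ?_⟩
  simpa only [Function.comp_def, hus] using hs.smul haα

theorem stmt1_general {n : ℕ} (A : Set (EuclideanSpace ℝ (Fin n)))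
    (h : EuclideanSpace ℝ (Fin n) → EuclideanSpace ℝ (Fin n))
    (hh : IsBiLipschitz h) (hh0 : h 0 = 0)
    (p : ℕ → EuclideanSpace ℝ (Fin n))
    (hp0 : Tendsto p atTop (𝓝 0))
    (hssp : ∀ m, SSP A (p m))
    (L L' : Set (EuclideanSpace ℝ (Fin n)))
    (hL : KuratowskiTendsto (fun m => LDir A (p m)) L)
    (hL' : KuratowskiTendsto (fun m => LDir (h '' A) (h (p m))) L') :
    (∃ ht : EuclideanSpace ℝ (Fin n) → EuclideanSpace ℝ (Fin n),
        IsBiLipschitz ht ∧ ht 0 = 0 ∧ ht '' L ⊆ L') ∧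
    ((∀ m, p m ∈ A ∧ p m ≠ 0) → L' ⊆ LGDir (h '' A) 0) := by
  obtain ⟨hbij, K, K', hK, hK'⟩ := hh
  obtain ⟨g, hgh, hhg⟩ := bijective_iff_has_inverse.1 hbij
  obtain ⟨t, ht0, hnear⟩ := exists_scales_eventually_mem_thickening
    (S := fun m => LDir A (p m)) (T := fun m => LDir (h '' A) (h (p m)))
    (fun m τ hτ => hK.rescale (p m) hτ.ne')
    (fun m w hw ε hε => (hssp m).eventually_rescale_mem_thickening hK hbij.1 hw hε)
  obtain ⟨ht, htbij, htK, htK', ht0', htend⟩ := (Ultrafilter.of atTop).exists_biLipschitz_tendsto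
    (H := fun m => rescale h (p m) (t m)) (G := fun m => rescale g (h (p m)) (t m))
    (fun m => hK.rescale _ (ht0 m).ne') (fun m => (hK'.to_rightInverse hhg).rescale _ (ht0 m).ne')
    (fun m => hgh.rescale _ (ht0 m).ne')
    (fun m => by simpa only [hgh (p m)] using hhg.rescale (h (p m)) (ht0 m).ne')
    (fun m => rescale_zero _ _ _)
  refine ⟨⟨ht, ⟨htbij, K, K', htK, htK'⟩, ht0', ?_⟩, fun hpA => ?_⟩
  · rintro _ ⟨w, hw, rfl⟩
    obtain ⟨u, hu, huw⟩ := hL.exists_tendsto hw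
    exact hL'.mem_of_tendsto (Ultrafilter.of_le atTop) (htend w) (hnear u hu w huw)
  · simpa only [hh0] using
      hL'.subset_LGDir (fun m => mem_image_of_mem h (hpA m).1) ((hK.continuous.tendsto 0).comp hp0)

theorem stmt1 {n : ℕ} (A : Set (EuclideanSpace ℝ (Fin n)))
    (h0 : (0 : EuclideanSpace ℝ (Fin n)) ∈ closure A)
    (h : EuclideanSpace ℝ (Fin n) → EuclideanSpace ℝ (Fin n))
    (hh : IsBiLipschitz h) (hh0 : h 0 = 0)
    (p : ℕ → EuclideanSpace ℝ (Fin n))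
    (hpA : ∀ m, p m ∈ closure A) (hp0 : Tendsto p atTop (𝓝 0))
    (hssp : ∀ m, SSP A (p m))
    (L L' : Set (EuclideanSpace ℝ (Fin n)))
    (hL : KuratowskiTendsto (fun m => LDir A (p m)) L)
    (hL' : KuratowskiTendsto (fun m => LDir (h '' A) (h (p m))) L') :
    (∃ ht : EuclideanSpace ℝ (Fin n) → EuclideanSpace ℝ (Fin n),
        IsBiLipschitz ht ∧ ht 0 = 0 ∧ ht '' L ⊆ L') ∧
    ((∀ m, p m ∈ A ∧ p m ≠ 0) → L' ⊆ LGDir (h '' A) 0) :=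
  stmt1_general A h hh hh0 p hp0 hssp L L' hL hL'
end

section
/- Let h : ℝⁿ → ℝⁿ be a bi-Lipschitz homeomorphism with h(0) = 0 and let v ∈ S^{n-1} be such that the limit L := lim_{t→0⁺} h(t·v)/t exists; set l_v := {t·v : t > 0} and c := L/‖L‖, so that D_0(h(l_v)) = {c}. Then: (1) for every sequence b_i → 0 in ℝⁿ with b_i ≠ 0 such that h(b_i)/‖h(b_i)‖ → c, one has b_i/‖b_i‖ → v; (2) the set h(l_v) satisfies condition (SSP) at 0. -/
open Filter Topology Set Asymptotics

variable {E : Type*} [NormedAddCommGroup E] [NormedSpace ℝ E]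

/-!
Since `h (t • v) = t • L + o(t)` with `L ≠ 0` (by the lower Lipschitz bound), the only direction of
`h(l_v)` at `0` is `L / ‖L‖`, and any `a → 0` with that limiting direction satisfies
`a = h (s • v) + o(‖a‖)` for `s := ‖a‖ / ‖L‖`. For (SSP) take `b := h (s • v)`: the lower bound
`‖s • v‖ ≤ K' ‖b‖` makes `a = O(b)`. For (1) take `a := h(b)` and pull the estimate back through `h`,
which is Lipschitz in both directions: `b - s • v = o(‖b‖)`, so the direction of `b` tends to `v`.
-/

variable {F : Type*} [NormedAddCommGroup F] [NormedSpace ℝ F] {ι : Type*} {l : Filter ι}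

lemma inv_norm_smul_smul_of_pos_s4 {c : ℝ} (hc : 0 < c) (x : F) :
    ‖c • x‖⁻¹ • (c • x) = ‖x‖⁻¹ • x := by
  rw [norm_smul, Real.norm_of_nonneg hc.le, smul_smul, mul_inv_rev, inv_mul_cancel_right₀ hc.ne']

lemma norm_inv_norm_smul_sub_inv_norm_smul_le {x : F} (hx : x ≠ 0) (y : F) :
    ‖‖x‖⁻¹ • x - ‖y‖⁻¹ • y‖ ≤ 2 * ‖x - y‖ / ‖x‖ := by
  have hx' : 0 < ‖x‖ := norm_pos_iff.mpr hx
  rcases eq_or_ne y 0 with rfl | hy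
  · rw [norm_zero, inv_zero, zero_smul, sub_zero, sub_zero, norm_smul, norm_inv, norm_norm,
      inv_mul_cancel₀ hx'.ne', mul_div_assoc, div_self hx'.ne']
    norm_num
  have hy' : ‖y‖ ≠ 0 := norm_ne_zero_iff.mpr hy
  have hsplit : ‖x‖⁻¹ • x - ‖y‖⁻¹ • y = ‖x‖⁻¹ • ((x - y) + ((‖y‖ - ‖x‖) / ‖y‖) • y) := by
    rw [sub_div, div_self hy', smul_add, smul_sub, sub_smul, one_smul, smul_sub, smul_smul,
      div_eq_mul_inv, inv_mul_cancel_left₀ hx'.ne']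
    abel
  calc ‖‖x‖⁻¹ • x - ‖y‖⁻¹ • y‖ = ‖x‖⁻¹ * ‖(x - y) + ((‖y‖ - ‖x‖) / ‖y‖) • y‖ := by
        rw [hsplit, norm_smul, norm_inv, norm_norm]
    _ ≤ ‖x‖⁻¹ * (‖x - y‖ + ‖x - y‖) := by
        gcongr
        refine (norm_add_le _ _).trans (add_le_add_right ?_ _)
        rw [norm_smul, Real.norm_eq_abs, abs_div, abs_norm, div_mul_cancel₀ _ hy']
        exact (abs_norm_sub_norm_le y x).trans (norm_sub_rev y x).le
    _ = 2 * ‖x - y‖ / ‖x‖ := by ring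

lemma tendsto_inv_norm_smul_sub_of_isLittleO {x y : ι → F} (hx : ∀ i, x i ≠ 0)
    (hxy : (fun i => x i - y i) =o[l] x) :
    Tendsto (fun i => ‖x i‖⁻¹ • x i - ‖y i‖⁻¹ • y i) l (𝓝 0) := by
  have hbound := hxy.norm_norm.tendsto_div_nhds_zero.const_mul 2
  rw [mul_zero] at hbound
  refine squeeze_zero_norm (fun i => ?_) hbound
  rw [← mul_div_assoc]
  exact norm_inv_norm_smul_sub_inv_norm_smul_le (hx i) (y i)

lemma tendsto_inv_norm_smul_of_tendsto_inv_smul {t : ι → ℝ} {x : ι → F} {L : F}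
    (ht : ∀ i, 0 < t i) (hL : L ≠ 0) (hx : Tendsto (fun i => (t i)⁻¹ • x i) l (𝓝 L)) :
    Tendsto (fun i => ‖x i‖⁻¹ • x i) l (𝓝 (‖L‖⁻¹ • L)) :=
  ((hx.norm.inv₀ (norm_ne_zero_iff.mpr hL)).smul hx).congr fun i =>
    inv_norm_smul_smul_of_pos_s4 (inv_pos.mpr (ht i)) (x i)

section Ray

variable {h : E → F} {v : E} {L : F}

lemma AntilipschitzWith.norm_le_mul_norm_of_tendsto {K' : NNReal} (hK' : AntilipschitzWith K' h)
    (h0 : h 0 = 0) (hL : Tendsto (fun t : ℝ => t⁻¹ • h (t • v)) (𝓝[>] 0) (𝓝 L)) :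
    ‖v‖ ≤ K' * ‖L‖ := by
  refine ge_of_tendsto (hL.norm.const_mul (K' : ℝ)) (eventually_nhdsWithin_of_forall fun t ht => ?_)
  have ht : 0 < t := ht
  have hle := hK'.le_mul_norm h0 (t • v)
  rw [norm_smul, Real.norm_of_nonneg ht.le] at hle
  rw [norm_smul, norm_inv, Real.norm_of_nonneg ht.le, ← mul_assoc, mul_comm _ t⁻¹, mul_assoc,
    le_inv_mul_iff₀ ht]
  exact hle

lemma AntilipschitzWith.ne_zero_of_tendsto {K' : NNReal} (hK' : AntilipschitzWith K' h)
    (h0 : h 0 = 0) (hv : v ≠ 0) (hL : Tendsto (fun t : ℝ => t⁻¹ • h (t • v)) (𝓝[>] 0) (𝓝 L)) :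
    L ≠ 0 := by
  rintro rfl
  have := hK'.norm_le_mul_norm_of_tendsto h0 hL
  rw [norm_zero, mul_zero] at this
  exact hv (norm_le_zero_iff.mp this)

lemma isLittleO_sub_apply_smul_of_tendsto_inv_norm_smul (hL0 : L ≠ 0)
    (hL : Tendsto (fun t : ℝ => t⁻¹ • h (t • v)) (𝓝[>] 0) (𝓝 L))
    {a : ι → F} (ha0 : ∀ i, a i ≠ 0) (ha : Tendsto a l (𝓝 0))
    (hdir : Tendsto (fun i => ‖a i‖⁻¹ • a i) l (𝓝 (‖L‖⁻¹ • L))) :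
    (fun i => a i - h ((‖a i‖ / ‖L‖) • v)) =o[l] a := by
  have hL' : 0 < ‖L‖ := norm_pos_iff.mpr hL0
  have hs : Tendsto (fun i => ‖a i‖ / ‖L‖) l (𝓝[>] 0) := by
    refine tendsto_nhdsWithin_iff.mpr ⟨?_, Eventually.of_forall fun i => ?_⟩
    · simpa using ha.norm.div_const ‖L‖
    · exact div_pos (norm_pos_iff.mpr (ha0 i)) hL'
  have hratio : Tendsto (fun i => ‖a i‖⁻¹ • (a i - h ((‖a i‖ / ‖L‖) • v))) l (𝓝 0) := by
    have hlim := hdir.sub ((hL.comp hs).const_smul ‖L‖⁻¹)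
    rw [sub_self] at hlim
    refine hlim.congr fun i => ?_
    simp only [Function.comp_apply, smul_sub, smul_smul, inv_div]
    rw [div_eq_mul_inv, ← mul_assoc, inv_mul_cancel₀ hL'.ne', one_mul]
  refine isLittleO_norm_right.mp ((isLittleOTVS_iff_isLittleO (𝕜 := ℝ)).mp ?_)
  refine (isLittleOTVS_iff_tendsto_inv_smul (Eventually.of_forall fun i hi => ?_)).mpr hratio
  exact absurd (norm_eq_zero.mp hi) (ha0 i)

lemma dirSet_image_ray_subset {K' : NNReal} (hK' : AntilipschitzWith K' h) (h0 : h 0 = 0)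
    (hv : v ≠ 0) (hL : Tendsto (fun t : ℝ => t⁻¹ • h (t • v)) (𝓝[>] 0) (𝓝 L)) :
    dirSet (h '' {x | ∃ t : ℝ, 0 < t ∧ x = t • v}) 0 ⊆ {‖L‖⁻¹ • L} := by
  rintro d ⟨-, x, hx, hx0, hxd⟩
  simp only [sub_zero] at hxd
  have hray : ∀ i, ∃ t : ℝ, 0 < t ∧ h (t • v) = x i := fun i => by
    obtain ⟨_, ⟨t, ht, rfl⟩, hxi⟩ := (hx i).1
    exact ⟨t, ht, hxi⟩
  choose t ht hxt using hray
  have hv' : 0 < ‖v‖ := norm_pos_iff.mpr hv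
  have htx : ∀ i, t i ≤ K' / ‖v‖ * ‖x i‖ := fun i => by
    have hle := hK'.le_mul_norm h0 (t i • v)
    rw [norm_smul, Real.norm_of_nonneg (ht i).le, hxt i] at hle
    rw [div_mul_eq_mul_div, le_div_iff₀ hv']
    exact hle
  have ht0 : Tendsto t atTop (𝓝[>] 0) := by
    refine tendsto_nhdsWithin_iff.mpr ⟨?_, Eventually.of_forall ht⟩
    refine squeeze_zero (fun i => (ht i).le) htx ?_
    simpa using hx0.norm.const_mul (K' / ‖v‖)
  have hL0 : L ≠ 0 := hK'.ne_zero_of_tendsto h0 hv hL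
  have hxL : Tendsto (fun i => (t i)⁻¹ • x i) atTop (𝓝 L) := by
    simpa only [Function.comp_def, hxt] using hL.comp ht0
  exact tendsto_nhds_unique hxd (tendsto_inv_norm_smul_of_tendsto_inv_smul ht hL0 hxL)

lemma tendsto_inv_norm_smul_of_tendsto_inv_norm_smul_apply {K K' : NNReal}
    (hK : LipschitzWith K h) (hK' : AntilipschitzWith K' h) (h0 : h 0 = 0) (hv : ‖v‖ = 1)
    (hL : Tendsto (fun t : ℝ => t⁻¹ • h (t • v)) (𝓝[>] 0) (𝓝 L))
    {b : ι → E} (hb0 : ∀ i, b i ≠ 0) (hb : Tendsto b l (𝓝 0))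
    (hdir : Tendsto (fun i => ‖h (b i)‖⁻¹ • h (b i)) l (𝓝 (‖L‖⁻¹ • L))) :
    Tendsto (fun i => ‖b i‖⁻¹ • b i) l (𝓝 v) := by
  have hL0 : L ≠ 0 := hK'.ne_zero_of_tendsto h0 (norm_ne_zero_iff.mp (hv ▸ one_ne_zero)) hL
  have hhb0 : ∀ i, h (b i) ≠ 0 := fun i hi => hb0 i (hK'.injective (hi.trans h0.symm))
  have hhb : Tendsto (fun i => h (b i)) l (𝓝 0) := h0 ▸ (hK.continuous.tendsto 0).comp hb
  set s := fun i => ‖h (b i)‖ / ‖L‖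
  have hs : ∀ i, 0 < s i := fun i => div_pos (norm_pos_iff.mpr (hhb0 i)) (norm_pos_iff.mpr hL0)
  have himage : (fun i => h (b i) - h (s i • v)) =o[l] fun i => h (b i) :=
    isLittleO_sub_apply_smul_of_tendsto_inv_norm_smul hL0 hL hhb0 hhb hdir
  have hpull : (fun i => b i - s i • v) =O[l] fun i => h (b i) - h (s i • v) :=
    isBigO_of_le' l fun i => by simpa only [dist_eq_norm] using hK'.le_mul_dist (b i) (s i • v)
  have hpush : (fun i => h (b i)) =O[l] b := isBigO_of_le' l fun i => hK.norm_le_mul h0 (b i)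
  have hlim := tendsto_inv_norm_smul_sub_of_isLittleO hb0
    (hpull.trans_isLittleO (himage.trans_isBigO hpush))
  refine tendsto_sub_nhds_zero_iff.mp (hlim.congr fun i => ?_)
  rw [inv_norm_smul_smul_of_pos_s4 (hs i), hv, inv_one, one_smul]

lemma ssp_image_ray {K' : NNReal} (hK' : AntilipschitzWith K' h) (h0 : h 0 = 0) (hv : v ≠ 0)
    (hL : Tendsto (fun t : ℝ => t⁻¹ • h (t • v)) (𝓝[>] 0) (𝓝 L)) :
    SSP (h '' {x | ∃ t : ℝ, 0 < t ∧ x = t • v}) 0 := by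
  rintro a ha0 ha ⟨d, hd, hdir⟩
  obtain rfl := dirSet_image_ray_subset hK' h0 hv hL hd
  simp only [sub_zero] at hdir ⊢
  have hL0 : L ≠ 0 := hK'.ne_zero_of_tendsto h0 hv hL
  have hL' : 0 < ‖L‖ := norm_pos_iff.mpr hL0
  set s := fun m => ‖a m‖ / ‖L‖
  have hs : ∀ m, 0 < s m := fun m => div_pos (norm_pos_iff.mpr (ha0 m)) hL'
  have happrox : (fun m => a m - h (s m • v)) =o[atTop] a :=
    isLittleO_sub_apply_smul_of_tendsto_inv_norm_smul hL0 hL ha0 ha hdir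
  have hbound : a =O[atTop] fun m => h (s m • v) := by
    refine isBigO_of_le' (c := ‖L‖ / ‖v‖ * K') _ fun m => ?_
    have hle := hK'.le_mul_norm h0 (s m • v)
    rw [norm_smul, Real.norm_of_nonneg (hs m).le] at hle
    calc ‖a m‖ = ‖L‖ / ‖v‖ * (s m * ‖v‖) := by simp only [s]; field_simp
      _ ≤ ‖L‖ / ‖v‖ * (K' * ‖h (s m • v)‖) := by gcongr
      _ = ‖L‖ / ‖v‖ * K' * ‖h (s m • v)‖ := by ring
  exact ⟨fun m => h (s m • v), fun m => ⟨s m • v, ⟨s m, hs m, rfl⟩, rfl⟩,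
    happrox.norm_norm.tendsto_div_nhds_zero,
    (happrox.trans_isBigO hbound).norm_norm.tendsto_div_nhds_zero⟩

end Ray

theorem stmt4 {n : ℕ}
    (h : EuclideanSpace ℝ (Fin n) → EuclideanSpace ℝ (Fin n))
    (hh : IsBiLipschitz h) (hh0 : h 0 = 0)
    (v : EuclideanSpace ℝ (Fin n)) (hv : ‖v‖ = 1)
    (L : EuclideanSpace ℝ (Fin n))
    (hL : Tendsto (fun t : ℝ => t⁻¹ • h (t • v)) (𝓝[>] (0 : ℝ)) (𝓝 L)) :
    -- (1): any sequence whose image induces the direction `c = L/‖L‖` induces the direction `v`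
    (∀ b : ℕ → EuclideanSpace ℝ (Fin n), (∀ i, b i ≠ 0) → Tendsto b atTop (𝓝 0) →
      Tendsto (fun i => ‖h (b i)‖⁻¹ • h (b i)) atTop (𝓝 (‖L‖⁻¹ • L)) →
      Tendsto (fun i => ‖b i‖⁻¹ • b i) atTop (𝓝 v)) ∧
    -- (2): `h(l_v)` satisfies (SSP) at `0`
    SSP (h '' {x | ∃ t : ℝ, 0 < t ∧ x = t • v}) 0 := by
  obtain ⟨-, K, K', hK, hK'⟩ := hh
  exact ⟨fun b hb0 hb hdir =>
      tendsto_inv_norm_smul_of_tendsto_inv_norm_smul_apply hK hK' hh0 hv hL hb0 hb hdir,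
    ssp_image_ray hK' hh0 (norm_ne_zero_iff.mp (hv ▸ one_ne_zero)) hL⟩
end
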